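/- With notation as in the staircase lemma, the coefficient c_k of x^k in P(x) = Σ_{r=1}^m x^{α_r}(1+x)^{β_r} equals Σ_{r=1}^m C(β_r, k − α_r), c_k = 0 for k < α_m, and c_k > 0 for all α_m ≤ k ≤ α_m + β_m = deg P. -/

import Mathlib

open Finset Polynomial

/-!
The summand `x^{α_r}(1+x)^{β_r}` has positive coefficients exactly in the degrees
`α_r, …, α_r + β_r`. Along the staircase `α` decreases and `α + β` increases, so all these
degree intervals lie in the last one, `[α_m, α_m + β_m]`, which the summand `r = m` fills;
as the coefficients are natural numbers, nothing cancels.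
-/

namespace Polynomial

theorem coeff_X_pow_mul_one_add_X_pow {R : Type*} [Semiring R] (a b k : ℕ) :
    (X ^ a * (1 + X) ^ b : R[X]).coeff k = if a ≤ k then (b.choose (k - a) : R) else 0 := by
  rw [coeff_X_pow_mul', coeff_one_add_X_pow]

theorem coeff_X_pow_mul_one_add_X_pow_pos_iff (a b k : ℕ) :
    0 < (X ^ a * (1 + X) ^ b : ℕ[X]).coeff k ↔ a ≤ k ∧ k ≤ a + b := by
  rw [coeff_X_pow_mul_one_add_X_pow, Nat.cast_id]
  split_ifs with h
  · rw [Nat.pos_iff_ne_zero, Ne, Nat.choose_eq_zero_iff]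
    omega
  · simp only [lt_self_iff_false, false_iff, not_and]
    omega

theorem coeff_sum_X_pow_mul_one_add_X_pow_pos_iff {ι : Type*} (s : Finset ι) (a b : ι → ℕ)
    (k : ℕ) :
    0 < (∑ r ∈ s, X ^ a r * (1 + X) ^ b r : ℕ[X]).coeff k ↔
      ∃ r ∈ s, a r ≤ k ∧ k ≤ a r + b r := by
  simp only [finsetSum_coeff, Finset.sum_pos_iff, coeff_X_pow_mul_one_add_X_pow_pos_iff]

end Polynomial

theorem staircase_interval_le_last {m : ℕ} {α β : ℕ → ℕ}
    (hα : ∀ r, 1 ≤ r → r < m → α (r + 1) ≤ α r)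
    (hstair : ∀ r, 1 ≤ r → r < m → α (r + 1) + β (r + 1) = α r + β r + 1)
    {r : ℕ} (hr : r ∈ Icc 1 m) :
    α m ≤ α r ∧ α r + β r ≤ α m + β m := by
  rw [mem_Icc] at hr
  have hr' : r ∈ Set.Icc 1 m := hr
  have hm : m ∈ Set.Icc 1 m := ⟨hr.1.trans hr.2, le_rfl⟩
  have hanti : AntitoneOn α (Set.Icc 1 m) :=
    antitoneOn_of_add_one_le Set.ordConnected_Icc fun s _ hs hs1 ↦ hα s hs.1 hs1.2
  have hmono : MonotoneOn (fun r ↦ α r + β r) (Set.Icc 1 m) :=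
    monotoneOn_of_le_add_one Set.ordConnected_Icc fun s _ hs hs1 ↦ by
      simp only [hstair s hs.1 hs1.2, Nat.le_succ]
  exact ⟨hanti hr' hm hr.2, hmono hr' hm hr.2⟩

theorem staircase_coefficients_general (m : ℕ) (hm : 1 ≤ m) (α β : ℕ → ℕ)
    (hα : ∀ r, 1 ≤ r → r < m → α (r + 1) ≤ α r)
    (hstair : ∀ r, 1 ≤ r → r < m → α (r + 1) + β (r + 1) = α r + β r + 1) :
    letI P : Polynomial ℕ := ∑ r ∈ Finset.Icc 1 m, X ^ (α r) * (1 + X) ^ (β r)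
    (∀ k : ℕ, P.coeff k
        = ∑ r ∈ Finset.Icc 1 m, if α r ≤ k then (β r).choose (k - α r) else 0)
    ∧ (∀ k : ℕ, k < α m → P.coeff k = 0)
    ∧ (∀ k : ℕ, α m ≤ k → k ≤ α m + β m → 0 < P.coeff k)
    ∧ P.natDegree = α m + β m := by
  set P : ℕ[X] := ∑ r ∈ Icc 1 m, X ^ α r * (1 + X) ^ β r
  have hpos : ∀ k, 0 < P.coeff k ↔ α m ≤ k ∧ k ≤ α m + β m := fun k ↦ by
    rw [coeff_sum_X_pow_mul_one_add_X_pow_pos_iff]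
    refine ⟨fun ⟨r, hr, hk⟩ ↦ ?_, fun hk ↦ ⟨m, mem_Icc.2 ⟨hm, le_rfl⟩, hk⟩⟩
    have := staircase_interval_le_last hα hstair hr
    omega
  have hzero : ∀ k, ¬(α m ≤ k ∧ k ≤ α m + β m) → P.coeff k = 0 := fun k hk ↦
    Nat.eq_zero_of_not_pos (mt (hpos k).1 hk)
  refine ⟨fun k ↦ ?_, fun k hk ↦ hzero k (by omega), fun k h₁ h₂ ↦ (hpos k).2 ⟨h₁, h₂⟩, ?_⟩
  · simp only [P, finsetSum_coeff, coeff_X_pow_mul_one_add_X_pow, Nat.cast_id]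
  · refine natDegree_eq_of_le_of_coeff_ne_zero ?_ ((hpos _).2 ⟨le_add_right le_rfl, le_rfl⟩).ne'
    exact natDegree_le_iff_coeff_eq_zero.2 fun k hk ↦ hzero k (by omega)

/-- Coefficient extraction and no-internal-zeros for the staircase polynomial
`P(x) = Σ_{r=1}^m x^{α_r}(1+x)^{β_r}`: `c_k = Σ_r C(β_r, k - α_r)`, `c_k = 0` for
`k < α_m`, and `c_k > 0` for `α_m ≤ k ≤ α_m + β_m = deg P`. -/
theorem staircase_coefficients (m : ℕ) (hm : 1 ≤ m) (α β : ℕ → ℕ)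
    (hα : ∀ r, 1 ≤ r → r < m → α (r + 1) ≤ α r)
    (hα1 : 1 ≤ α m)
    (hβ : ∀ r, 1 ≤ r → r < m → β r < β (r + 1))
    (hstair : ∀ r, 1 ≤ r → r < m → α (r + 1) + β (r + 1) = α r + β r + 1) :
    letI P : Polynomial ℕ := ∑ r ∈ Finset.Icc 1 m, X ^ (α r) * (1 + X) ^ (β r)
    (∀ k : ℕ, P.coeff k
        = ∑ r ∈ Finset.Icc 1 m, if α r ≤ k then (β r).choose (k - α r) else 0)
    ∧ (∀ k : ℕ, k < α m → P.coeff k = 0)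
    ∧ (∀ k : ℕ, α m ≤ k → k ≤ α m + β m → 0 < P.coeff k)
    ∧ P.natDegree = α m + β m :=
  staircase_coefficients_general m hm α β hα hstair
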